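/- The collection of U-null subsets of κ^ω forms a σ-ideal: it is closed under subsets and countable unions. -/
import Mathlib


universe u

namespace UMeas

variable {A : Type u}

/-- The first `n` values of an infinite sequence, as a list. -/
def seg (s : ℕ → A) (n : ℕ) : List A := List.ofFn (fun i : Fin n => s i)

/-- `T` is a `U`-branching tree: a set of finite sequences closed under initial
segments, containing the empty sequence, whose branching sets are in `U`. -/
def IsUTree (U : Ultrafilter A) (T : Set (List A)) : Prop :=
  ([] ∈ T) ∧ (∀ σ ∈ T, ∀ τ : List A, τ <+: σ → τ ∈ T) ∧
    ∀ σ ∈ T, {a : A | σ ++ [a] ∈ T} ∈ U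

/-- The set of infinite branches through `T`. -/
def branches (T : Set (List A)) : Set (ℕ → A) := {s | ∀ n, seg s n ∈ T}

/-- Concatenation `σ⌢s` of a finite sequence with an infinite sequence. -/
def app (σ : List A) (s : ℕ → A) : ℕ → A :=
  fun n => if h : n < σ.length then σ.get ⟨n, h⟩ else s (n - σ.length)

/-- The section `X↾σ = {s | σ⌢s ∈ X}`. -/
def sect (X : Set (ℕ → A)) (σ : List A) : Set (ℕ → A) := {s | app σ s ∈ X}

def ULarge (U : Ultrafilter A) (X : Set (ℕ → A)) : Prop :=
  ∃ T, IsUTree U T ∧ branches T ⊆ X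

def USmall (U : Ultrafilter A) (X : Set (ℕ → A)) : Prop :=
  ∃ T, IsUTree U T ∧ branches T ∩ X = ∅

def UDetermined (U : Ultrafilter A) (X : Set (ℕ → A)) : Prop :=
  ULarge U X ∨ USmall U X

def UNull (U : Ultrafilter A) (X : Set (ℕ → A)) : Prop :=
  ∀ σ : List A, USmall U (sect X σ)

def UMeasurable (U : Ultrafilter A) (X : Set (ℕ → A)) : Prop :=
  ∀ σ : List A, UDetermined U (sect X σ)

lemma seg_add (s : ℕ → A) (n m : ℕ) :
    seg s (n + m) = seg s n ++ seg (fun i => s (n + i)) m := by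
  simp [seg]
  rw [List.ofFn_add]
  congr 1

lemma app_seg (s : ℕ → A) (n : ℕ) : app (seg s n) (fun m => s (n + m)) = s := by
  funext m
  simp only [app, seg, List.length_ofFn]
  split
  · simp [List.get_ofFn]
  · congr 1; omega

lemma app_append (σ τ : List A) (s : ℕ → A) : app (σ ++ τ) s = app σ (app τ s) := by
  funext n
  simp only [app, List.length_append, List.get_eq_getElem]
  rcases lt_or_ge n σ.length with h | h
  · rw [dif_pos (by omega), dif_pos h, List.getElem_append_left h]
  · rcases lt_or_ge n (σ.length + τ.length) with h2 | h2
    · rw [dif_pos h2, dif_neg (by omega), dif_pos (by omega),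
        List.getElem_append_right h]
    · rw [dif_neg (by omega), dif_neg (by omega), dif_neg (by omega)]
      congr 1; omega

lemma sect_sect (X : Set (ℕ → A)) (σ τ : List A) :
    sect (sect X σ) τ = sect X (σ ++ τ) := by
  ext s
  simp [sect, app_append]

/-- Countable unions of `U`-null sets are `U`-small. -/
lemma uSmall_iUnion (U : Ultrafilter A) (Y : ℕ → Set (ℕ → A))
    (h : ∀ n, UNull U (Y n)) : USmall U (⋃ n, Y n) := by
  choose T hTtree hTdis using fun n σ => h n σ
  refine ⟨{τ | ∀ n ≤ τ.length, τ.drop n ∈ T n (τ.take n)}, ⟨?_, ?_, ?_⟩, ?_⟩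
  · intro n hn
    simp only [List.drop_nil, List.take_nil]
    exact (hTtree n []).1
  · rintro σ hσ τ ⟨δ, rfl⟩ n hn
    have h2 := hσ n (le_trans hn (by simp))
    rw [List.take_append_of_le_length hn, List.drop_append_of_le_length hn] at h2
    exact (hTtree n (τ.take n)).2.1 _ h2 _ ⟨δ, rfl⟩
  · intro τ hτ
    have : {a : A | τ ++ [a] ∈ {τ | ∀ n ≤ τ.length, τ.drop n ∈ T n (τ.take n)}} =
        ⋂ n ∈ Finset.range (τ.length + 2),
          {a : A | (τ ++ [a]).drop n ∈ T n ((τ ++ [a]).take n)} := by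
      ext a
      simp only [Set.mem_setOf_eq, Set.mem_iInter, Finset.mem_range,
        List.length_append, List.length_cons, List.length_nil]
      constructor
      · intro H n hn; exact H n (by omega)
      · intro H n hn; exact H n (by omega)
    rw [this]
    apply (Filter.biInter_finset_mem _).2
    intro n hn
    rcases le_or_gt n τ.length with hle | hlt
    · have htake : ∀ a : A, (τ ++ [a]).take n = τ.take n := fun a =>
        List.take_append_of_le_length hle
      have hdrop : ∀ a : A, (τ ++ [a]).drop n = τ.drop n ++ [a] := fun a =>
        List.drop_append_of_le_length hle
      have hbig := (hTtree n (τ.take n)).2.2 (τ.drop n) (hτ n hle)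
      apply Filter.mem_of_superset hbig
      intro a ha
      simp only [Set.mem_setOf_eq] at *
      rw [htake a, hdrop a]
      exact ha
    · have : {a : A | (τ ++ [a]).drop n ∈ T n ((τ ++ [a]).take n)} = Set.univ := by
        ext a
        simp only [Set.mem_setOf_eq, Set.mem_univ, iff_true]
        rw [List.drop_eq_nil_of_le (by simpa using hlt)]
        exact (hTtree n _).1
      rw [this]
      exact Filter.univ_mem
  · rw [Set.eq_empty_iff_forall_notMem]
    rintro s ⟨hs, hsY⟩
    simp only [Set.mem_iUnion] at hsY
    obtain ⟨n, hn⟩ := hsY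
    set t : ℕ → A := fun m => s (n + m) with ht
    have hbr : t ∈ branches (T n (seg s n)) := by
      intro m
      have h2 := hs (n + m) n (by simp [seg])
      rw [seg_add] at h2
      rw [List.take_append_of_le_length (by simp [seg]),
        List.drop_append_of_le_length (by simp [seg]),
        List.take_of_length_le (by simp [seg]),
        List.drop_eq_nil_of_le (by simp [seg]), List.nil_append] at h2
      exact h2
    have hsect : t ∈ sect (Y n) (seg s n) := by
      simp only [sect, Set.mem_setOf_eq, ht, app_seg]
      exact hn
    have := hTdis n (seg s n)
    rw [Set.eq_empty_iff_forall_notMem] at this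
    exact this t ⟨hbr, hsect⟩

end UMeas

/-- The `U`-null sets form a σ-ideal: closed under subsets and countable unions. -/
theorem stmt2 {A : Type u} (U : Ultrafilter A) :
    (∀ X Y : Set (ℕ → A), UMeas.UNull U Y → X ⊆ Y → UMeas.UNull U X) ∧
    (∀ X : ℕ → Set (ℕ → A), (∀ n, UMeas.UNull U (X n)) → UMeas.UNull U (⋃ n, X n)) := by
  constructor
  · intro X Y hY hXY σ
    obtain ⟨T, hT, hdis⟩ := hY σ
    refine ⟨T, hT, Set.eq_empty_of_subset_empty ?_⟩
    rw [← hdis]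
    exact Set.inter_subset_inter_right _ (fun s hs => hXY hs)
  · intro X hX σ
    have hnull : ∀ n, UMeas.UNull U (UMeas.sect (X n) σ) := by
      intro n τ
      rw [UMeas.sect_sect]
      exact hX n (σ ++ τ)
    have := UMeas.uSmall_iUnion U (fun n => UMeas.sect (X n) σ) hnull
    have heq : UMeas.sect (⋃ n, X n) σ = ⋃ n, UMeas.sect (X n) σ := by
      ext s
      simp [UMeas.sect]
    rwa [heq]
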